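/- arXiv:1503.02323 — 6 statements merged into one kernel-verified Lean document; each statement's English description precedes it below -/
import Mathlib

section
/- Let Y be a submonoid of the affine space Kˢ under componentwise multiplication (with identity (1,...,1)). Then the vanishing ideal I(Y) ⊆ K[t₁,...,tₛ] is generated by binomials, i.e., by differences of monomials tᵃ − tᵇ with a, b ∈ ℕˢ. -/
open MvPolynomial

noncomputable section

variable {K : Type} [Field K] {s : ℕ}

def IsBinomialIdeal {σ : Type} (I : Ideal (MvPolynomial σ K)) : Prop :=
  ∃ B : Set (MvPolynomial σ K),
    (∀ f ∈ B, ∃ a b : σ →₀ ℕ, f = monomial a 1 - monomial b 1) ∧ I = Ideal.span B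

def affineVanishingIdeal (Y : Set (Fin s → K)) : Ideal (MvPolynomial (Fin s) K) :=
  Ideal.span {f | ∀ α ∈ Y, eval α f = 0}

def affineZeroSet (I : Ideal (MvPolynomial (Fin s) K)) : Set (Fin s → K) :=
  {α | ∀ f ∈ I, eval α f = 0}

def projVanishingIdeal (Y : Set (Projectivization K (Fin s → K))) :
    Ideal (MvPolynomial (Fin s) K) :=
  Ideal.span {f | (∃ n, f.IsHomogeneous n) ∧
    ∀ (α : Fin s → K) (hα : α ≠ 0), Projectivization.mk K α hα ∈ Y → eval α f = 0}

def projZeroSet (I : Ideal (MvPolynomial (Fin s) K)) :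
    Set (Projectivization K (Fin s → K)) :=
  {p | ∀ f ∈ I, (∃ n, f.IsHomogeneous n) →
    ∀ (α : Fin s → K) (hα : α ≠ 0), Projectivization.mk K α hα = p → eval α f = 0}

def IsProjSubmonoid (Y : Set (Projectivization K (Fin s → K))) : Prop :=
  (∀ h1 : (1 : Fin s → K) ≠ 0, Projectivization.mk K 1 h1 ∈ Y) ∧
  ∀ (α β : Fin s → K) (hα : α ≠ 0) (hβ : β ≠ 0),
    Projectivization.mk K α hα ∈ Y → Projectivization.mk K β hβ ∈ Y →
    ∀ hab : α * β ≠ 0, Projectivization.mk K (α * β) hab ∈ Y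

def projTorus (K : Type) [Field K] (s : ℕ) : Set (Projectivization K (Fin s → K)) :=
  {p | ∀ (α : Fin s → K) (hα : α ≠ 0), Projectivization.mk K α hα = p → ∀ i, α i ≠ 0}

def IsTorusSubgroup (Y : Set (Projectivization K (Fin s → K))) : Prop :=
  Y ⊆ projTorus K s ∧ IsProjSubmonoid Y ∧
  ∀ (α : Fin s → K) (hα : α ≠ 0), Projectivization.mk K α hα ∈ Y →
    ∀ hinv : α⁻¹ ≠ 0, Projectivization.mk K α⁻¹ hinv ∈ Y

def IsLatticeIdeal (I : Ideal (MvPolynomial (Fin s) K)) : Prop :=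
  IsBinomialIdeal I ∧ ∀ (i : Fin s) (f : MvPolynomial (Fin s) K), X i * f ∈ I → f ∈ I

def IsGradedIdeal {σ : Type} (I : Ideal (MvPolynomial σ K)) : Prop :=
  ∀ f ∈ I, ∀ n, homogeneousComponent n f ∈ I

/-!
Restricted to the monoid `Y`, each monomial `tᵃ` is a character `χₐ : Y →* K`, and a polynomial
`f = ∑ cₐ tᵃ` vanishes on `Y` exactly when `∑ cₐ χₐ = 0`. By Dedekind's independence of
characters, the coefficients of `f` then sum to zero on every fibre of `a ↦ χₐ`. Choosing one
exponent `r` in each fibre writes `f = ∑ cₐ (tᵃ - tʳ⁽ᵃ⁾)`, a combination of binomials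
`tᵃ - tᵇ` with `χₐ = χ_b`, and such binomials vanish on `Y`.
-/

open Finset

theorem Finset.sum_smul_comp_eq_sum_image {ι κ R V : Type*} [DecidableEq κ] [Semiring R]
    [AddCommMonoid V] [Module R V] (s : Finset ι) (g : ι → κ) (c : ι → R) (v : κ → V) :
    ∑ i ∈ s, c i • v (g i) = ∑ j ∈ s.image g, (∑ i ∈ s with g i = j, c i) • v j := by
  rw [← sum_fiberwise_of_maps_to (fun i hi => mem_image_of_mem g hi)]
  refine sum_congr rfl fun j _ => ?_
  rw [sum_smul]
  exact sum_congr rfl fun i hi => by rw [(mem_filter.1 hi).2]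

theorem MonoidHom.sum_fiber_eq_zero_of_sum_smul_eq_zero {G R ι : Type*} [Monoid G] [CommRing R]
    [IsDomain R] [DecidableEq (G →* R)] (t : Finset ι) (c : ι → R) (χ : ι → G →* R)
    (h : ∑ i ∈ t, c i • ⇑(χ i) = 0) (φ : G →* R) : ∑ i ∈ t with χ i = φ, c i = 0 := by
  rw [sum_smul_comp_eq_sum_image t χ c (fun ψ => ⇑ψ)] at h
  by_cases hφ : φ ∈ t.image χ
  · exact linearIndependent_iff'.1 (linearIndependent_monoidHom G R) _ _ h φ hφ
  · refine sum_eq_zero fun i hi => absurd ?_ hφ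
    rw [← (mem_filter.1 hi).2]
    exact mem_image_of_mem χ (mem_filter.1 hi).1

theorem MvPolynomial.mem_span_binomials_of_sum_fiber_coeff_eq_zero {R σ T : Type*} [CommRing R]
    [DecidableEq T] (χ : (σ →₀ ℕ) → T) (f : MvPolynomial σ R)
    (hf : ∀ t, ∑ a ∈ f.support with χ a = t, coeff a f = 0) :
    f ∈ Ideal.span {g | ∃ a b, g = monomial a 1 - monomial b 1 ∧ χ a = χ b} := by
  set r := Function.invFun χ
  have hrest : ∑ a ∈ f.support, coeff a f • monomial (r (χ a)) (1 : R) = 0 := by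
    rw [sum_smul_comp_eq_sum_image f.support χ _ (fun t => monomial (r t) (1 : R))]
    exact sum_eq_zero fun t _ => by rw [hf t, zero_smul]
  -- trade each monomial for the chosen representative of its fibre; the fibre sums kill the rest
  have hdecomp : f = ∑ a ∈ f.support, coeff a f • (monomial a 1 - monomial (r (χ a)) 1) := by
    simp only [smul_sub, sum_sub_distrib, hrest, sub_zero]
    simpa only [smul_monomial, smul_eq_mul, mul_one] using f.as_sum
  rw [hdecomp]
  refine Ideal.sum_mem _ fun a _ => Submodule.smul_of_tower_mem _ _ (Ideal.subset_span ?_)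
  exact ⟨a, r (χ a), rfl, (Function.invFun_eq ⟨a, rfl⟩).symm⟩

def monomialCharacter {R σ : Type*} [CommMonoid R] (a : σ →₀ ℕ) : (σ → R) →* R where
  toFun α := a.prod fun i n => α i ^ n
  map_one' := by simp
  map_mul' α β := by simp only [Pi.mul_apply, mul_pow, Finsupp.prod_mul]

theorem MvPolynomial.eval_eq_sum_coeff_mul_monomialCharacter {R σ : Type*} [CommSemiring R]
    (α : σ → R) (f : MvPolynomial σ R) :
    eval α f = ∑ a ∈ f.support, coeff a f * monomialCharacter a α :=
  eval_eq α f

theorem MvPolynomial.eval_monomial_one_eq_monomialCharacter {R σ : Type*} [CommSemiring R]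
    (α : σ → R) (a : σ →₀ ℕ) :
    eval α (monomial a 1) = monomialCharacter a α := by
  rw [eval_monomial, one_mul]; rfl

theorem isBinomialIdeal_span_vanishing_submonoid {σ : Type} (M : Submonoid (σ → K)) :
    IsBinomialIdeal (Ideal.span {f : MvPolynomial σ K | ∀ α ∈ M, eval α f = 0}) := by
  classical
  let χ (a : σ →₀ ℕ) : M →* K := (monomialCharacter a).comp M.subtype
  refine ⟨{g | ∃ a b, g = monomial a 1 - monomial b 1 ∧ χ a = χ b},
    fun g ⟨a, b, hg, _⟩ => ⟨a, b, hg⟩, le_antisymm ?_ (Ideal.span_mono ?_)⟩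
  · refine Ideal.span_le.2 fun f hf => mem_span_binomials_of_sum_fiber_coeff_eq_zero χ f
      (MonoidHom.sum_fiber_eq_zero_of_sum_smul_eq_zero _ _ χ ?_)
    funext y
    simpa [χ, ← eval_eq_sum_coeff_mul_monomialCharacter] using hf y y.2
  · rintro _ ⟨a, b, rfl, hab⟩ α hα
    have hχ := DFunLike.congr_fun hab ⟨α, hα⟩
    simp only [χ, MonoidHom.comp_apply, Submonoid.coe_subtype] at hχ
    simp only [map_sub, eval_monomial_one_eq_monomialCharacter, hχ, sub_self]

theorem affine_monoid_binomial (Y : Set (Fin s → K))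
    (h1 : (1 : Fin s → K) ∈ Y)
    (hmul : ∀ a ∈ Y, ∀ b ∈ Y, a * b ∈ Y) :
    IsBinomialIdeal (affineVanishingIdeal Y) :=
  isBinomialIdeal_span_vanishing_submonoid
    { carrier := Y, mul_mem' := fun ha hb => hmul _ ha _ hb, one_mem' := h1 }
end
end

section
/- Let Y be a submonoid of Kˢ under componentwise multiplication and let τ ∈ K*. If binomials t^{b_i} − t^{c_i}, i = 1,...,r, generate the vanishing ideal I(Y), then the non-pure binomials t^{b_i}/τ^{|b_i|} − t^{c_i}/τ^{|c_i|}, i = 1,...,r, generate I(τY), where τY = {τy : y ∈ Y} and |a| = a₁ + ⋯ + aₛ. -/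
open MvPolynomial

noncomputable section

variable {K : Type} [Field K] {s : ℕ}

/-!
The substitution `φ : tᵢ ↦ τ tᵢ` is a `K`-algebra automorphism of `S` with `(φ f)(α) = f (τ α)`,
so `I(τY) = φ⁻¹(I(Y))`, which is the image of `I(Y)` under the inverse substitution
`tᵢ ↦ τ⁻¹ tᵢ`. That substitution carries generators to generators, and `tᵃ` to `τ^(-|a|) tᵃ`.
-/

namespace MvPolynomial

variable {σ R : Type*} [CommSemiring R]

def scaleVars (u : R) : MvPolynomial σ R →ₐ[R] MvPolynomial σ R :=
  aeval fun i => C u * X i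

theorem scaleVars_X (u : R) (i : σ) : scaleVars u (X i : MvPolynomial σ R) = C u * X i :=
  aeval_X _ _

theorem scaleVars_scaleVars (u v : R) (p : MvPolynomial σ R) :
    scaleVars u (scaleVars v p) = scaleVars (u * v) p := by
  rw [← AlgHom.comp_apply]
  congr 1
  refine algHom_ext fun i => ?_
  simp only [AlgHom.comp_apply, scaleVars_X, map_mul, algHom_C, algebraMap_eq]
  ring

theorem scaleVars_one_apply (p : MvPolynomial σ R) : scaleVars 1 p = p := by
  rw [← AlgHom.id_apply (R := R) p]
  congr 1
  refine algHom_ext fun i => ?_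
  rw [scaleVars_X, C_1, one_mul, AlgHom.id_apply]

theorem scaleVars_monomial (u : R) (a : σ →₀ ℕ) (k : R) :
    scaleVars u (monomial a k) = monomial a (u ^ a.degree * k) := by
  have hC : (a.prod fun _ e => (C u : MvPolynomial σ R) ^ e) = C (u ^ a.degree) := by
    rw [Finsupp.prod, Finset.prod_pow_eq_pow_sum, Finsupp.degree_apply, map_pow]
  rw [scaleVars, aeval_monomial, monomial_eq]
  simp only [mul_pow, Finsupp.prod_mul]
  rw [hC, algebraMap_eq, C_mul]
  ring

theorem eval_scaleVars (u : R) (x : σ → R) (p : MvPolynomial σ R) :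
    eval x (scaleVars u p) = eval (u • x) p := by
  induction p using MvPolynomial.induction_on with
  | C a => simp [scaleVars]
  | add p q hp hq => simp only [map_add, hp, hq]
  | mul_X p i hp => simp [hp, scaleVars_X]

theorem comap_scaleVars_eq_map {u v : R} (huv : u * v = 1) (I : Ideal (MvPolynomial σ R)) :
    I.comap (scaleVars u) = I.map (scaleVars v) := by
  have hvu : v * u = 1 := by rw [mul_comm, huv]
  apply le_antisymm
  · exact Ideal.comap_le_map_of_inverse _ _ _ fun p => by
      rw [scaleVars_scaleVars, hvu, scaleVars_one_apply]
  · exact Ideal.map_le_comap_of_inverse _ _ _ fun p => by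
      rw [scaleVars_scaleVars, huv, scaleVars_one_apply]

theorem vanishingIdeal_image_smul {F : Type*} [Field F] (u : F) (Y : Set (σ → F)) :
    vanishingIdeal F ((fun y => u • y) '' Y) = (vanishingIdeal F Y).comap (scaleVars u) := by
  ext p
  simp [eval_scaleVars]

end MvPolynomial

theorem affineVanishingIdeal_eq_vanishingIdeal (Y : Set (Fin s → K)) :
    affineVanishingIdeal Y = vanishingIdeal K Y := by
  rw [affineVanishingIdeal, ← Ideal.span_eq (vanishingIdeal K Y)]
  rfl

theorem scaled_monoid_nonpure_binomial_general (Y : Set (Fin s → K))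
    (τ : K) (hτ : τ ≠ 0) {r : ℕ} (b c : Fin r → (Fin s →₀ ℕ))
    (hgen : affineVanishingIdeal Y =
      Ideal.span (Set.range fun i => (monomial (b i) 1 - monomial (c i) 1 :
        MvPolynomial (Fin s) K))) :
    affineVanishingIdeal ((fun y => τ • y) '' Y) =
      Ideal.span (Set.range fun i =>
        (monomial (b i) ((τ ^ ((b i).sum fun _ n => n))⁻¹) -
         monomial (c i) ((τ ^ ((c i).sum fun _ n => n))⁻¹) :
          MvPolynomial (Fin s) K)) := by
  rw [affineVanishingIdeal_eq_vanishingIdeal] at hgen ⊢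
  rw [vanishingIdeal_image_smul, comap_scaleVars_eq_map (mul_inv_cancel₀ hτ), hgen,
    Ideal.map_span, ← Set.range_comp]
  congr 2 with i
  simp only [Function.comp_apply, map_sub, scaleVars_monomial, mul_one, inv_pow,
    Finsupp.degree_apply, Finsupp.sum]

theorem scaled_monoid_nonpure_binomial (Y : Set (Fin s → K))
    (h1 : (1 : Fin s → K) ∈ Y)
    (hmul : ∀ a ∈ Y, ∀ b ∈ Y, a * b ∈ Y)
    (τ : K) (hτ : τ ≠ 0) {r : ℕ} (b c : Fin r → (Fin s →₀ ℕ))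
    (hgen : affineVanishingIdeal Y =
      Ideal.span (Set.range fun i => (monomial (b i) 1 - monomial (c i) 1 :
        MvPolynomial (Fin s) K))) :
    affineVanishingIdeal ((fun y => τ • y) '' Y) =
      Ideal.span (Set.range fun i =>
        (monomial (b i) ((τ ^ ((b i).sum fun _ n => n))⁻¹) -
         monomial (c i) ((τ ^ ((c i).sum fun _ n => n))⁻¹) :
          MvPolynomial (Fin s) K)) :=
  scaled_monoid_nonpure_binomial_general Y τ hτ b c hgen
end
end

section
/- Let 𝕐 be a subset of projective space ℙ^{s−1} over a field K such that the equivalence class of (1,...,1) lies in 𝕐 and such that for all [α], [β] ∈ 𝕐 with componentwise product α·β ≠ 0, the class [α·β] lies in 𝕐. Then the graded vanishing ideal I(𝕐) ⊆ K[t₁,...,tₛ] is generated by binomials. -/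
/-!
Let `M ⊆ Kˢ` be the affine cone over `𝕐` together with its vertex `0`. The hypotheses make `M`
closed under componentwise products, and every monomial `tᵃ` restricts to a character of the
monoid `M`. If `f = ∑ cₐ tᵃ` vanishes on `M`, Dedekind's independence of characters says that
the coefficients `cₐ` over the monomials inducing one and the same character sum to zero, so `f`
is a combination of binomials `tᵃ - tᵇ` with `a, b` in the support of `f` and `tᵃ = tᵇ` on `M`.
A homogeneous `f` vanishing on `𝕐` vanishes on `M` (at `0` because `[1,…,1] ∈ 𝕐`), and its
monomials all have the same degree, so these binomials are homogeneous and lie in `I(𝕐)`.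
-/


open MvPolynomial

noncomputable section

variable {K : Type} [Field K] {s : ℕ}

open Finset

namespace MvPolynomial

variable {σ R : Type*}

theorem IsHomogeneous.eval_smul [CommSemiring R] {f : MvPolynomial σ R} {n : ℕ}
    (hf : f.IsHomogeneous n) (c : R) (x : σ → R) : eval (c • x) f = c ^ n * eval x f := by
  rw [eval_eq, eval_eq, mul_sum]
  refine sum_congr rfl fun d hd => ?_
  simp only [Pi.smul_apply, smul_eq_mul, mul_pow, prod_mul_distrib, prod_pow_eq_pow_sum,
    ← hf.degree_eq_sum_deg_support hd]
  ring

def monomialHom [CommSemiring R] (a : σ →₀ ℕ) : (σ → R) →* R where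
  toFun x := eval x (monomial a 1)
  map_one' := by simp [eval_monomial]
  map_mul' x y := by simp [eval_monomial, Finsupp.prod_mul, mul_pow]

theorem sum_fiber_eq_zero_of_sum_smul_monoidHom_eq_zero {G L ι : Type*} [MulOneClass G]
    [CommRing L] [IsDomain L] [DecidableEq (G →* L)] {S : Finset ι} {c : ι → L}
    {χ : ι → G →* L} (h : ∑ i ∈ S, c i • ⇑(χ i) = 0) (φ : G →* L) :
    ∑ i ∈ S with χ i = φ, c i = 0 := by
  have hfiber : ∑ ψ ∈ S.image χ, (∑ i ∈ S with χ i = ψ, c i) • ⇑ψ = 0 := by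
    rw [← h, ← sum_fiberwise_of_maps_to fun i hi => mem_image_of_mem χ hi]
    refine sum_congr rfl fun ψ _ => ?_
    rw [sum_smul]
    exact sum_congr rfl fun i hi => by rw [(mem_filter.mp hi).2]
  by_cases hφ : φ ∈ S.image χ
  · exact linearIndependent_iff'.mp (linearIndependent_monoidHom G L) _ _ hfiber φ hφ
  · refine sum_eq_zero fun i hi => absurd ?_ hφ
    rw [← (mem_filter.mp hi).2]
    exact mem_image_of_mem χ (mem_filter.mp hi).1

theorem mem_span_binomials_of_sum_fiber_eq_zero [CommRing R] {κ : Type*} [DecidableEq κ]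
    (f : MvPolynomial σ R) (φ : (σ →₀ ℕ) → κ)
    (h : ∀ k, ∑ a ∈ f.support with φ a = k, coeff a f = 0) :
    f ∈ Ideal.span {g | ∃ a ∈ f.support, ∃ b ∈ f.support, φ a = φ b ∧
      g = monomial a 1 - monomial b 1} := by
  set rep : κ → σ →₀ ℕ := Function.invFunOn φ f.support
  have hrep : ∑ a ∈ f.support, monomial (rep (φ a)) (coeff a f) = 0 := by
    rw [← sum_fiberwise_of_maps_to fun a ha => mem_image_of_mem φ ha]
    refine sum_eq_zero fun k _ => ?_
    calc ∑ a ∈ f.support with φ a = k, monomial (rep (φ a)) (coeff a f)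
        = monomial (rep k) (∑ a ∈ f.support with φ a = k, coeff a f) := by
          rw [map_sum]
          exact sum_congr rfl fun a ha => by rw [(mem_filter.mp ha).2]
      _ = 0 := by rw [h k, map_zero]
  have hf : f = ∑ a ∈ f.support, C (coeff a f) * (monomial a 1 - monomial (rep (φ a)) 1) := by
    simp only [mul_sub, C_mul_monomial, mul_one, sum_sub_distrib, hrep, sub_zero]
    exact f.as_sum
  exact (congrArg (· ∈ Ideal.span _) hf).mpr <| Ideal.sum_mem _ fun a ha =>
    Ideal.mul_mem_left _ _ <| Ideal.subset_span ⟨a, ha, rep (φ a),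
      Function.invFunOn_mem ⟨a, ha, rfl⟩, (Function.invFunOn_eq ⟨a, ha, rfl⟩).symm, rfl⟩

theorem mem_span_binomials_of_eval_eq_zero [CommRing R] [IsDomain R] (M : Submonoid (σ → R))
    {f : MvPolynomial σ R} (hf : ∀ x ∈ M, eval x f = 0) :
    f ∈ Ideal.span {g | ∃ a ∈ f.support, ∃ b ∈ f.support,
      (∀ x ∈ M, eval x (monomial a 1) = eval x (monomial b 1)) ∧
      g = monomial a 1 - monomial b 1} := by
  classical
  let χ (a : σ →₀ ℕ) : M →* R := (monomialHom a).comp M.subtype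
  have hχ : ∑ a ∈ f.support, coeff a f • ⇑(χ a) = 0 := by
    ext x
    simpa [χ, monomialHom, eval_monomial, eval_eq] using hf x x.2
  refine Ideal.span_mono ?_ (mem_span_binomials_of_sum_fiber_eq_zero f χ
    (sum_fiber_eq_zero_of_sum_smul_monoidHom_eq_zero hχ))
  rintro g ⟨a, ha, b, hb, hab, rfl⟩
  exact ⟨a, ha, b, hb, fun x hx => DFunLike.congr_fun hab ⟨x, hx⟩, rfl⟩

end MvPolynomial

namespace IsProjSubmonoid

variable {Y : Set (Projectivization K (Fin s → K))}

-- Including the vertex `0` is what makes the cone over `Y` closed under products.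
def cone (hY : IsProjSubmonoid Y) : Submonoid (Fin s → K) where
  carrier := {α | ∀ hα : α ≠ 0, Projectivization.mk K α hα ∈ Y}
  one_mem' := hY.1
  mul_mem' {α β} hα hβ hαβ :=
    hY.2 α β (left_ne_zero_of_mul hαβ) (right_ne_zero_of_mul hαβ) (hα _) (hβ _) hαβ

theorem eval_eq_zero_of_mem_cone (hs : 0 < s) (hY : IsProjSubmonoid Y)
    {f : MvPolynomial (Fin s) K} {n : ℕ} (hf : f.IsHomogeneous n)
    (hfY : ∀ (α : Fin s → K) (hα : α ≠ 0), Projectivization.mk K α hα ∈ Y → eval α f = 0)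
    {α : Fin s → K} (hα : α ∈ hY.cone) : eval α f = 0 := by
  rcases eq_or_ne α 0 with rfl | hα0
  · have : Nonempty (Fin s) := ⟨⟨0, hs⟩⟩
    have h1 : (1 : Fin s → K) ≠ 0 := one_ne_zero
    simpa [hfY 1 h1 (hY.1 h1)] using hf.eval_smul 0 1
  · exact hfY α hα0 (hα hα0)

end IsProjSubmonoid

theorem proj_monoid_binomial (hs : 0 < s) (Y : Set (Projectivization K (Fin s → K)))
    (h1 : ∀ hone : (1 : Fin s → K) ≠ 0, Projectivization.mk K 1 hone ∈ Y)
    (hmul : ∀ (α β : Fin s → K) (hα : α ≠ 0) (hβ : β ≠ 0),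
      Projectivization.mk K α hα ∈ Y → Projectivization.mk K β hβ ∈ Y →
      ∀ hab : α * β ≠ 0, Projectivization.mk K (α * β) hab ∈ Y) :
    IsBinomialIdeal (projVanishingIdeal Y) := by
  have hY : IsProjSubmonoid Y := ⟨h1, hmul⟩
  refine ⟨{g | ∃ a b : Fin s →₀ ℕ, a.degree = b.degree ∧
    (∀ α ∈ hY.cone, eval α (monomial a 1) = eval α (monomial b 1)) ∧
    g = monomial a 1 - monomial b 1}, ?_, le_antisymm ?_ ?_⟩
  · rintro g ⟨a, b, -, -, rfl⟩
    exact ⟨a, b, rfl⟩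
  · refine Ideal.span_le.mpr ?_
    rintro f ⟨⟨n, hf⟩, hfY⟩
    refine Ideal.span_mono ?_ (mem_span_binomials_of_eval_eq_zero hY.cone
      fun α => hY.eval_eq_zero_of_mem_cone hs hf hfY)
    rintro g ⟨a, ha, b, hb, hab, rfl⟩
    exact ⟨a, b, (hf.degree_eq_sum_deg_support ha).symm.trans
      (hf.degree_eq_sum_deg_support hb), hab, rfl⟩
  · refine Ideal.span_le.mpr ?_
    rintro g ⟨a, b, hdeg, hab, rfl⟩
    refine Ideal.subset_span ⟨⟨a.degree, (isHomogeneous_monomial _ rfl).sub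
      (isHomogeneous_monomial _ hdeg.symm)⟩, fun α hα hαY => ?_⟩
    rw [map_sub, hab α fun _ => hαY, sub_self]

end
end

section
/- Let 𝕐 ⊆ ℙ^{s−1} over a field K. If the graded vanishing ideal I(𝕐) is generated by binomials, then V(I(𝕐)) ∪ {[0]}, the projective zero set of I(𝕐) together with an added zero element, is closed under componentwise multiplication and contains [(1,...,1)]; that is, it is a submonoid of ℙ^{s−1} ∪ {[0]}. -/
open MvPolynomial

noncomputable section

variable {K : Type} [Field K] {s : ℕ}

/-!
Since `I(𝕐)` is spanned by homogeneous polynomials it is graded, so a point `[α]` lies in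
`V(I(𝕐))` exactly when `α` is an affine zero of the whole ideal; scaling the representative is
harmless because homogeneous polynomials only pick up a factor `c ^ n`. If `I(𝕐)` is spanned by
binomials `x^a - x^b`, being an affine zero of it means `α^a = α^b` for each generator, a
condition preserved by componentwise products and satisfied by `(1, …, 1)`.
-/

theorem MvPolynomial.IsHomogeneous.eval_smul_s4 {σ R : Type*} [CommSemiring R]
    {f : MvPolynomial σ R} {n : ℕ} (hf : f.IsHomogeneous n) (c : R) (x : σ → R) :
    eval (c • x) f = c ^ n * eval x f := by
  rw [eval_eq, eval_eq, Finset.mul_sum]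
  refine Finset.sum_congr rfl fun d hd => ?_
  have hdeg : ∑ i ∈ d.support, d i = n := by
    simpa [Finsupp.weight_apply, Finsupp.sum] using hf (mem_support_iff.mp hd)
  simp only [Pi.smul_apply, smul_eq_mul, mul_pow, Finset.prod_mul_distrib,
    Finset.prod_pow_eq_pow_sum, hdeg]
  ring

theorem MvPolynomial.eval_monomial_one_mul {σ R : Type*} [CommSemiring R] (a : σ →₀ ℕ)
    (x y : σ → R) :
    eval (x * y) (monomial a (1 : R)) = eval x (monomial a 1) * eval y (monomial a 1) := by
  simp only [eval_monomial, one_mul, Pi.mul_apply, mul_pow, Finsupp.prod_mul]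

attribute [local instance] MvPolynomial.gradedAlgebra in
theorem isGradedIdeal_span_of_isHomogeneous {σ : Type} {S : Set (MvPolynomial σ K)}
    (hS : ∀ f ∈ S, ∃ n, f.IsHomogeneous n) : IsGradedIdeal (Ideal.span S) :=
  fun _ hf n =>
    homogeneousComponent_mem_of_mem (Ideal.homogeneous_span _ S hS) hf n

theorem isGradedIdeal_projVanishingIdeal (Y : Set (Projectivization K (Fin s → K))) :
    IsGradedIdeal (projVanishingIdeal Y) :=
  isGradedIdeal_span_of_isHomogeneous fun _ hf => hf.1

theorem mem_affineZeroSet_span_iff {B : Set (MvPolynomial (Fin s) K)} {α : Fin s → K} :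
    α ∈ affineZeroSet (Ideal.span B) ↔ ∀ b ∈ B, eval α b = 0 :=
  ⟨fun h b hb => h b (Ideal.subset_span hb),
    fun h _ hf => (Ideal.span_le (I := RingHom.ker (eval α))).mpr h hf⟩

theorem mk_mem_projZeroSet_iff {I : Ideal (MvPolynomial (Fin s) K)} (hI : IsGradedIdeal I)
    {α : Fin s → K} (hα : α ≠ 0) :
    Projectivization.mk K α hα ∈ projZeroSet I ↔ α ∈ affineZeroSet I := by
  constructor
  · intro hV f hf
    rw [← sum_homogeneousComponent f, map_sum]
    exact Finset.sum_eq_zero fun n _ =>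
      hV _ (hI f hf n) ⟨n, homogeneousComponent_isHomogeneous n f⟩ α hα rfl
  · rintro hZ f hf ⟨n, hn⟩ β hβ hβα
    obtain ⟨c, rfl⟩ := (Projectivization.mk_eq_mk_iff K β α hβ hα).mp hβα
    rw [Units.smul_def, hn.eval_smul_s4, hZ f hf, mul_zero]

namespace IsBinomialIdeal

variable {I : Ideal (MvPolynomial (Fin s) K)}

theorem one_mem_affineZeroSet (hI : IsBinomialIdeal I) : (1 : Fin s → K) ∈ affineZeroSet I := by
  obtain ⟨B, hB, rfl⟩ := hI
  refine mem_affineZeroSet_span_iff.mpr fun b hb => ?_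
  obtain ⟨a, a', rfl⟩ := hB b hb
  simp [eval_monomial, Finsupp.prod]

theorem mul_mem_affineZeroSet (hI : IsBinomialIdeal I) {α β : Fin s → K}
    (hα : α ∈ affineZeroSet I) (hβ : β ∈ affineZeroSet I) : α * β ∈ affineZeroSet I := by
  obtain ⟨B, hB, rfl⟩ := hI
  rw [mem_affineZeroSet_span_iff] at hα hβ ⊢
  intro b hb
  obtain ⟨a, a', rfl⟩ := hB b hb
  have hαb := hα _ hb
  have hβb := hβ _ hb
  rw [map_sub, sub_eq_zero] at hαb hβb ⊢
  rw [eval_monomial_one_mul, eval_monomial_one_mul, hαb, hβb]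

end IsBinomialIdeal

theorem binomial_implies_zeroset_monoid_general
    (Y : Set (Projectivization K (Fin s → K)))
    (h : IsBinomialIdeal (projVanishingIdeal Y)) :
    IsProjSubmonoid (projZeroSet (projVanishingIdeal Y)) := by
  have hgr := isGradedIdeal_projVanishingIdeal Y
  refine ⟨fun h1 => ?_, fun α β hα hβ hαV hβV hαβ => ?_⟩
  · exact (mk_mem_projZeroSet_iff hgr h1).mpr h.one_mem_affineZeroSet
  · rw [mk_mem_projZeroSet_iff hgr] at hαV hβV ⊢
    exact h.mul_mem_affineZeroSet hαV hβV

theorem binomial_implies_zeroset_monoid (hs : 0 < s)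
    (Y : Set (Projectivization K (Fin s → K)))
    (h : IsBinomialIdeal (projVanishingIdeal Y)) :
    IsProjSubmonoid (projZeroSet (projVanishingIdeal Y)) :=
  binomial_implies_zeroset_monoid_general Y h
end
end

section
/- If 𝕐 is a submonoid of the projective torus T = {[x] ∈ ℙ^{s−1} : xᵢ ∈ K* for all i} under componentwise multiplication, then I(𝕐) is a lattice ideal: it is generated by binomials and each variable tᵢ is a nonzerodivisor on S/I(𝕐). -/
open MvPolynomial

noncomputable section

variable {K : Type} [Field K] {s : ℕ}

/-!
The affine cone `C` over `Y` (the nonzero representatives of its points) is a submonoid of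
`(K*)^s`, and `I(𝕐)` is the ideal generated by the homogeneous polynomials vanishing
on `C`. Each monomial `t^a` restricts to a character `α ↦ α^a` of `C`, so a polynomial
vanishing on `C` is a linear relation among characters; by Dedekind's independence of characters
its coefficients cancel within each class of monomials inducing the same character. Subtracting
from every monomial a fixed representative of its class (and of its degree) therefore writes a
homogeneous polynomial vanishing on `C` as a combination of homogeneous binomials vanishing on
`C`. Since `I(𝕐)` is graded and every point of `C` has nonzero coordinates, `tᵢ f ∈ I(𝕐)` forces
each homogeneous component of `f` to vanish on `C`, hence `f ∈ I(𝕐)`.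
-/

namespace MvPolynomial

variable {σ R : Type*}

theorem homogeneousComponent_add_mul_of_isHomogeneous [CommSemiring R] {p : MvPolynomial σ R}
    {j : ℕ} (hp : p.IsHomogeneous j) (n : ℕ) (f : MvPolynomial σ R) :
    homogeneousComponent (n + j) (p * f) = p * homogeneousComponent n f := by
  induction f using MvPolynomial.induction_on' with
  | monomial d c =>
    rw [homogeneousComponent_of_mem (hp.mul (isHomogeneous_monomial c rfl)),
      homogeneousComponent_of_mem (isHomogeneous_monomial c rfl)]
    by_cases h : n = d.degree
    · rw [if_pos (by omega), if_pos h]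
    · rw [if_neg (by omega), if_neg h, mul_zero]
  | add f g hf hg => rw [mul_add, map_add, hf, hg, map_add, mul_add]

theorem eq_sum_smul_binomial_of_sum_fiber_eq_zero [CommRing R] {ι : Type*} [DecidableEq ι]
    (f : MvPolynomial σ R) (κ : (σ →₀ ℕ) → ι)
    (hκ : ∀ k, ∑ a ∈ f.support with κ a = k, coeff a f = 0) :
    f = ∑ a ∈ f.support, coeff a f • (monomial a 1 - monomial (κ.invFun (κ a)) 1) := by
  have hrep : ∑ a ∈ f.support, monomial (κ.invFun (κ a)) (coeff a f) = 0 := by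
    rw [← Finset.sum_fiberwise_of_maps_to (fun a ha => Finset.mem_image_of_mem κ ha)]
    refine Finset.sum_eq_zero fun k _ => ?_
    rw [Finset.sum_congr rfl fun a ha => by rw [(Finset.mem_filter.1 ha).2],
      ← map_sum, hκ, map_zero]
  simp only [smul_sub, smul_monomial, smul_eq_mul, mul_one, Finset.sum_sub_distrib, hrep,
    sub_zero, ← f.as_sum]

def monomialChar [CommSemiring R] (M : Submonoid (σ → R)) (a : σ →₀ ℕ) : M →* R where
  toFun α := eval (α : σ → R) (monomial a 1)
  map_one' := by simp [eval_monomial]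
  map_mul' α β := by simp [eval_monomial, mul_pow, Finsupp.prod_mul]

theorem eval_eq_sum_monomialChar [CommSemiring R] {M : Submonoid (σ → R)} (α : M)
    (f : MvPolynomial σ R) :
    eval (α : σ → R) f = ∑ a ∈ f.support, coeff a f * monomialChar M a α := by
  conv_lhs => rw [f.as_sum]
  simp only [map_sum, eval_monomial, monomialChar, MonoidHom.coe_mk, OneHom.coe_mk, one_mul]

open scoped Classical in
theorem sum_fiber_monomialChar_eq_zero {M : Submonoid (σ → K)} {f : MvPolynomial σ K}
    (hf : f ∈ vanishingIdeal K (M : Set (σ → K))) (χ : M →* K) :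
    ∑ a ∈ f.support with monomialChar M a = χ, coeff a f = 0 := by
  set c : (M →* K) → K := fun χ => ∑ a ∈ f.support with monomialChar M a = χ, coeff a f
  have hc : ∑ χ ∈ f.support.image (monomialChar M), c χ • (χ : M → K) = 0 := by
    funext α
    rw [Pi.zero_apply, ← hf α α.2, aeval_eq_eval, eval_eq_sum_monomialChar,
      ← Finset.sum_fiberwise_of_maps_to (fun a ha => Finset.mem_image_of_mem (monomialChar M) ha)]
    simp only [Finset.sum_apply, Pi.smul_apply, smul_eq_mul, Finset.sum_mul, c]
    refine Finset.sum_congr rfl fun χ _ => Finset.sum_congr rfl fun a ha => ?_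
    rw [(Finset.mem_filter.1 ha).2]
  by_cases hχ : χ ∈ f.support.image (monomialChar M)
  · exact linearIndependent_iff'.1 (linearIndependent_monoidHom M K) _ c hc χ hχ
  · refine Finset.sum_eq_zero fun a ha => absurd ?_ hχ
    rw [Finset.mem_filter] at ha
    exact ha.2 ▸ Finset.mem_image_of_mem _ ha.1

theorem IsHomogeneous.degree_eq_of_mem_support [CommSemiring R] {f : MvPolynomial σ R} {n : ℕ}
    (hf : f.IsHomogeneous n) {a : σ →₀ ℕ} (ha : a ∈ f.support) : a.degree = n := by
  rw [Finsupp.degree_eq_weight_one]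
  exact hf (mem_support_iff.1 ha)

def homogeneousBinomialsVanishingOn (C : Set (σ → K)) : Set (MvPolynomial σ K) :=
  {f | ∃ a b : σ →₀ ℕ, a.degree = b.degree ∧ f = monomial a 1 - monomial b 1 ∧
    f ∈ vanishingIdeal K C}

theorem mem_span_homogeneousBinomialsVanishingOn {M : Submonoid (σ → K)} {f : MvPolynomial σ K}
    {n : ℕ} (hf : f.IsHomogeneous n) (hv : f ∈ vanishingIdeal K (M : Set (σ → K))) :
    f ∈ Ideal.span (homogeneousBinomialsVanishingOn (M : Set (σ → K))) := by
  classical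
  set κ : (σ →₀ ℕ) → ℕ × (M →* K) := fun a => (a.degree, monomialChar M a)
  have hκ : ∀ k, ∑ a ∈ f.support with κ a = k, coeff a f = 0 := by
    rintro ⟨m, χ⟩
    rw [Finset.filter_congr (q := fun a => m = n ∧ monomialChar M a = χ) fun a ha => by
      simp [κ, hf.degree_eq_of_mem_support ha, eq_comm]]
    by_cases hm : m = n
    · simpa [hm] using sum_fiber_monomialChar_eq_zero hv χ
    · simp [hm]
  rw [eq_sum_smul_binomial_of_sum_fiber_eq_zero f κ hκ]
  refine Ideal.sum_mem _ fun a _ => Submodule.smul_of_tower_mem _ _ (Ideal.subset_span ?_)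
  obtain ⟨hdeg, hchar⟩ := Prod.ext_iff.1 (Function.invFun_eq ⟨a, rfl⟩ : κ (κ.invFun (κ a)) = κ a)
  refine ⟨a, _, hdeg.symm, rfl, fun α hα => ?_⟩
  have hχ : eval α (monomial (κ.invFun (κ a)) 1) = eval α (monomial a 1) :=
    DFunLike.congr_fun hchar ⟨α, hα⟩
  rw [aeval_eq_eval, map_sub, hχ, sub_self]

def homogeneousVanishingIdeal (C : Set (σ → K)) : Ideal (MvPolynomial σ K) :=
  Ideal.span {f | (∃ n, f.IsHomogeneous n) ∧ f ∈ vanishingIdeal K C}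

variable {C : Set (σ → K)}

theorem homogeneousVanishingIdeal_le_vanishingIdeal :
    homogeneousVanishingIdeal C ≤ vanishingIdeal K C :=
  Ideal.span_le.2 fun _ hf => hf.2

theorem mem_homogeneousVanishingIdeal_of_isHomogeneous {f : MvPolynomial σ K} {n : ℕ}
    (hf : f.IsHomogeneous n) (hv : f ∈ vanishingIdeal K C) : f ∈ homogeneousVanishingIdeal C :=
  Ideal.subset_span ⟨⟨n, hf⟩, hv⟩

section
attribute [local instance] MvPolynomial.gradedAlgebra

theorem isHomogeneous_homogeneousVanishingIdeal :
    (homogeneousVanishingIdeal C).IsHomogeneous (homogeneousSubmodule σ K) :=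
  Ideal.homogeneous_span _ _ fun _ ⟨⟨n, hf⟩, _⟩ => ⟨n, hf⟩

theorem X_mul_mem_homogeneousVanishingIdeal_iff {i : σ} (hC : ∀ α ∈ C, α i ≠ 0)
    {f : MvPolynomial σ K} :
    X i * f ∈ homogeneousVanishingIdeal C ↔ f ∈ homogeneousVanishingIdeal C := by
  refine ⟨fun h => ?_, Ideal.mul_mem_left _ _⟩
  rw [mem_iff_homogeneousComponent_mem isHomogeneous_homogeneousVanishingIdeal]
  intro n
  have hXf := homogeneousComponent_mem_of_mem isHomogeneous_homogeneousVanishingIdeal h (n + 1)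
  rw [homogeneousComponent_add_mul_of_isHomogeneous (isHomogeneous_X K i)] at hXf
  refine mem_homogeneousVanishingIdeal_of_isHomogeneous
    (homogeneousComponent_isHomogeneous n f) fun α hα => ?_
  have := homogeneousVanishingIdeal_le_vanishingIdeal hXf α hα
  rw [map_mul, aeval_X] at this
  exact (mul_eq_zero.1 this).resolve_left (hC α hα)

end

theorem homogeneousVanishingIdeal_eq_span_homogeneousBinomialsVanishingOn
    (M : Submonoid (σ → K)) :
    homogeneousVanishingIdeal (M : Set (σ → K)) =
      Ideal.span (homogeneousBinomialsVanishingOn (M : Set (σ → K))) := by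
  refine le_antisymm (Ideal.span_le.2 fun f ⟨⟨n, hf⟩, hv⟩ =>
    mem_span_homogeneousBinomialsVanishingOn hf hv) (Ideal.span_le.2 ?_)
  rintro _ ⟨a, b, hab, rfl, hv⟩
  exact mem_homogeneousVanishingIdeal_of_isHomogeneous
    ((isHomogeneous_monomial 1 rfl).sub (isHomogeneous_monomial 1 hab.symm)) hv

theorem isBinomialIdeal_homogeneousVanishingIdeal {σ : Type} (M : Submonoid (σ → K)) :
    IsBinomialIdeal (homogeneousVanishingIdeal (M : Set (σ → K))) := by
  refine ⟨_, ?_, homogeneousVanishingIdeal_eq_span_homogeneousBinomialsVanishingOn M⟩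
  rintro _ ⟨a, b, -, hf, -⟩
  exact ⟨a, b, hf⟩

end MvPolynomial

def affineCone {V : Type*} [AddCommGroup V] [Module K V] (Y : Set (Projectivization K V)) :
    Set V :=
  {v | ∃ h : v ≠ 0, Projectivization.mk K v h ∈ Y}

theorem projVanishingIdeal_eq_homogeneousVanishingIdeal
    (Y : Set (Projectivization K (Fin s → K))) :
    projVanishingIdeal Y = homogeneousVanishingIdeal (affineCone Y) := by
  simp only [projVanishingIdeal, homogeneousVanishingIdeal, affineCone, mem_vanishingIdeal_iff,
    Set.mem_ofPred_eq, forall_exists_index, aeval_eq_eval]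

section TorusCone

variable {Y : Set (Projectivization K (Fin s → K))}

theorem apply_ne_zero_of_mem_affineCone (hT : Y ⊆ projTorus K s) {α : Fin s → K}
    (hα : α ∈ affineCone Y) (i : Fin s) : α i ≠ 0 :=
  let ⟨h, hY⟩ := hα
  hT hY α h rfl i

def affineConeSubmonoid (hs : 0 < s) (hT : Y ⊆ projTorus K s) (hm : IsProjSubmonoid Y) :
    Submonoid (Fin s → K) where
  carrier := affineCone Y
  one_mem' :=
    have h1 : (1 : Fin s → K) ≠ 0 := fun h => one_ne_zero (congrFun h ⟨0, hs⟩)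
    ⟨h1, hm.1 h1⟩
  mul_mem' := by
    rintro α β hα hβ
    have hαβ : α * β ≠ 0 := fun h => mul_ne_zero (apply_ne_zero_of_mem_affineCone hT hα ⟨0, hs⟩)
      (apply_ne_zero_of_mem_affineCone hT hβ ⟨0, hs⟩) (congrFun h ⟨0, hs⟩)
    exact ⟨hαβ, hm.2 α β hα.1 hβ.1 hα.2 hβ.2 hαβ⟩

end TorusCone

theorem torus_submonoid_lattice (hs : 0 < s)
    (Y : Set (Projectivization K (Fin s → K)))
    (hT : Y ⊆ projTorus K s) (hm : IsProjSubmonoid Y) :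
    IsLatticeIdeal (projVanishingIdeal Y) := by
  rw [projVanishingIdeal_eq_homogeneousVanishingIdeal]
  refine ⟨isBinomialIdeal_homogeneousVanishingIdeal (affineConeSubmonoid hs hT hm), fun i f => ?_⟩
  exact (X_mul_mem_homogeneousVanishingIdeal_iff
    fun α hα => apply_ne_zero_of_mem_affineCone hT hα i).1
end
end

section
/- Let K be an algebraically closed field and 𝕐 ⊆ ℙ^{s−1}. Then 𝕐 is a finite subgroup of the projective torus T if and only if there exist a finite subgroup H of K* and vectors v₁,...,vₛ ∈ ℤⁿ such that 𝕐 = {[(x^{v₁},...,x^{vₛ})] : x = (x₁,...,xₙ), xᵢ ∈ H for all i}. -/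
open MvPolynomial

noncomputable section

variable {K : Type} [Field K] {s : ℕ}

/-! A point of the torus is `[u]` for some `u : Fin s → Kˣ`, and `u` is unique once normalized by
`u 0 = 1`. So a finite subgroup `Y` of the torus lifts to a finite subgroup `G` of `(Kˣ)ˢ`, while the
image of any subgroup of `(Kˣ)ˢ` is a subgroup of the torus. The coordinates of the elements of `G`
are `|G|`-th roots of unity, hence powers of a single generator `g`. Enumerating
`G = {e₁, …, eₙ}` with `(e_k)_i = g ^ d_{ki}`, the monomial map `x ↦ (∏_k x_k ^ d_{ki})_i` sends
`⟨g⟩ⁿ` onto `G`. -/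

section MonomialMap

variable {ι κ M : Type*} [CommGroup M]

def monomialMap [Fintype κ] (v : ι → κ → ℤ) : (κ → M) →* (ι → M) where
  toFun x i := ∏ j, x j ^ v i j
  map_one' := by ext; simp
  map_mul' x y := by ext; simp [mul_zpow, Finset.prod_mul_distrib]

lemma monomialMap_apply [Fintype κ] (v : ι → κ → ℤ) (x : κ → M) (i : ι) :
    monomialMap v x i = ∏ j, x j ^ v i j := rfl

lemma monomialMap_mulSingle [Fintype κ] [DecidableEq κ] (v : ι → κ → ℤ) (k : κ) (g : M) :
    monomialMap v (Pi.mulSingle k g) = fun i => g ^ v i k := by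
  ext i
  rw [monomialMap_apply, Finset.prod_eq_single k (fun j _ hj => by simp [hj]) (by simp)]
  simp

theorem Subgroup.exists_eq_map_monomialMap (G : Subgroup (ι → M)) [Finite G] (g : M)
    (hg : ∀ u ∈ G, ∀ i, u i ∈ Subgroup.zpowers g) :
    ∃ (n : ℕ) (v : ι → Fin n → ℤ),
      G = (Subgroup.pi Set.univ fun _ => Subgroup.zpowers g).map (monomialMap v) := by
  classical
  let e := (Finite.equivFin G).symm
  choose d hd using fun k i => Subgroup.mem_zpowers_iff.1 (hg _ (e k).2 i)
  refine ⟨Nat.card G, fun i k => d k i, le_antisymm (fun u hu => ?_) ?_⟩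
  · obtain ⟨k, hk⟩ := e.surjective ⟨u, hu⟩
    refine ⟨Pi.mulSingle k g,
      (Subgroup.mulSingle_mem_pi (H := fun _ => Subgroup.zpowers g) k g).2 fun _ =>
        Subgroup.mem_zpowers g, ?_⟩
    ext i
    simp only [monomialMap_mulSingle, hd, hk]
  · rw [Subgroup.map_le_iff_le_comap]
    intro x hx
    choose c hc using fun j => Subgroup.mem_zpowers_iff.1 (hx j trivial)
    have hmap : monomialMap (fun i k => d k i) x = ∏ k, (e k : ι → M) ^ c k := by
      ext i
      simp only [monomialMap_apply, Finset.prod_apply, Pi.pow_apply, ← hc, ← hd, ← zpow_mul,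
        mul_comm]
    rw [Subgroup.mem_comap, hmap]
    exact G.prod_mem fun k _ => G.zpow_mem (e k).2 _

end MonomialMap

theorem Subgroup.exists_forall_mem_zpowers {R ι : Type*} [CommRing R] [IsDomain R]
    (G : Subgroup (ι → Rˣ)) [Finite G] :
    ∃ g : Rˣ, IsOfFinOrder g ∧ ∀ u ∈ G, ∀ i, u i ∈ Subgroup.zpowers g := by
  obtain ⟨g, hg⟩ := IsCyclic.exists_generator (α := rootsOfUnity (Nat.card G) R)
  refine ⟨g, isOfFinOrder_iff_pow_eq_one.2 ⟨_, Nat.card_pos, (mem_rootsOfUnity _ _).1 g.2⟩,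
    fun u hu i => ?_⟩
  have hu : u i ∈ rootsOfUnity (Nat.card G) R := by
    rw [mem_rootsOfUnity, ← Pi.pow_apply, show u ^ Nat.card G = 1 from
      congrArg Subtype.val (pow_card_eq_one' (x := (⟨u, hu⟩ : G)))]
    rfl
  obtain ⟨k, hk⟩ := Subgroup.mem_zpowers_iff.1 (hg ⟨u i, hu⟩)
  exact ⟨k, congrArg Subtype.val hk⟩

theorem Subgroup.exists_finite_eq_map_monomialMap {R ι : Type*} [CommRing R] [IsDomain R]
    (G : Subgroup (ι → Rˣ)) [Finite G] :
    ∃ (n : ℕ) (H : Subgroup Rˣ) (v : ι → Fin n → ℤ), (H : Set Rˣ).Finite ∧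
      G = (Subgroup.pi Set.univ fun _ => H).map (monomialMap v) := by
  obtain ⟨g, hg, hG⟩ := G.exists_forall_mem_zpowers
  obtain ⟨n, v, rfl⟩ := G.exists_eq_map_monomialMap g hG
  exact ⟨n, _, v, hg.finite_zpowers, rfl⟩

section Torus

variable [NeZero s] {Y : Set (Projectivization K (Fin s → K))}

def torusPoint (u : Fin s → Kˣ) : Projectivization K (Fin s → K) :=
  Projectivization.mk K (fun i => (u i : K)) fun h => (u 0).ne_zero (congrFun h 0)

lemma mk_eq_torusPoint_iff {α : Fin s → K} (hα : α ≠ 0) (u : Fin s → Kˣ) :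
    Projectivization.mk K α hα = torusPoint u ↔ ∃ c : Kˣ, α = fun i => ((c * u i : Kˣ) : K) := by
  simp only [torusPoint, Projectivization.mk_eq_mk_iff, eq_comm (a := α), funext_iff,
    Units.val_mul, Pi.smul_apply, Units.smul_def, smul_eq_mul]

lemma torusPoint_mem_projTorus (u : Fin s → Kˣ) : torusPoint u ∈ projTorus K s := by
  intro α hα h i
  obtain ⟨c, rfl⟩ := (mk_eq_torusPoint_iff hα u).1 h
  exact Units.ne_zero _

lemma exists_torusPoint_eq_of_mem_projTorus {p : Projectivization K (Fin s → K)}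
    (hp : p ∈ projTorus K s) : ∃ u : Fin s → Kˣ, u 0 = 1 ∧ torusPoint u = p := by
  induction p using Projectivization.ind with | h α hα => ?_
  have hα' := hp α hα rfl
  refine ⟨fun i => Units.mk0 (α i) (hα' i) / Units.mk0 (α 0) (hα' 0), div_self' _,
    ((mk_eq_torusPoint_iff hα _).2 ⟨Units.mk0 (α 0) (hα' 0), ?_⟩).symm⟩
  ext i
  simp

lemma torusPoint_injOn : Set.InjOn (torusPoint (K := K) (s := s)) {u | u 0 = 1} := by
  intro u (hu : u 0 = 1) w (hw : w 0 = 1) h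
  obtain ⟨c, hc⟩ := (mk_eq_torusPoint_iff _ w).1 h
  have hc1 : c = 1 := Units.ext <| by simpa [hu, hw] using (congrFun hc 0).symm
  ext i
  simpa [hc1] using congrFun hc i

theorem isTorusSubgroup_image (G : Subgroup (Fin s → Kˣ)) :
    IsTorusSubgroup (torusPoint '' (G : Set (Fin s → Kˣ))) := by
  refine ⟨?_, ⟨fun _ => ⟨1, G.one_mem, rfl⟩, ?_⟩, ?_⟩
  · rintro _ ⟨u, -, rfl⟩
    exact torusPoint_mem_projTorus u
  · rintro α β hα hβ ⟨u, hu, hαu⟩ ⟨w, hw, hβw⟩ hαβ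
    obtain ⟨c, rfl⟩ := (mk_eq_torusPoint_iff hα u).1 hαu.symm
    obtain ⟨d, rfl⟩ := (mk_eq_torusPoint_iff hβ w).1 hβw.symm
    refine ⟨u * w, G.mul_mem hu hw, ((mk_eq_torusPoint_iff hαβ _).2 ⟨c * d, ?_⟩).symm⟩
    ext i
    simp only [Pi.mul_apply, Units.val_mul]
    ring
  · rintro α hα ⟨u, hu, hαu⟩ hinv
    obtain ⟨c, rfl⟩ := (mk_eq_torusPoint_iff hα u).1 hαu.symm
    refine ⟨u⁻¹, G.inv_mem hu, ((mk_eq_torusPoint_iff hinv _).2 ⟨c⁻¹, ?_⟩).symm⟩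
    ext i
    simp [mul_comm]

def IsTorusSubgroup.normalizedLift (hY : IsTorusSubgroup Y) : Subgroup (Fin s → Kˣ) where
  carrier := {u | u 0 = 1 ∧ torusPoint u ∈ Y}
  one_mem' := ⟨rfl, hY.2.1.1 _⟩
  mul_mem' {u w} hu hw := ⟨by simp [hu.1, hw.1], hY.2.1.2 _ _ _ _ hu.2 hw.2 _⟩
  inv_mem' {u} hu := by
    refine ⟨by simp [hu.1], ?_⟩
    have hinv : (fun i => (u i : K))⁻¹ ≠ 0 := fun h =>
      (u 0).ne_zero (inv_eq_zero.1 (congrFun h 0))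
    convert hY.2.2 _ _ hu.2 hinv
    exact ((mk_eq_torusPoint_iff hinv _).2 ⟨1, by ext; simp⟩).symm

lemma IsTorusSubgroup.image_normalizedLift (hY : IsTorusSubgroup Y) :
    torusPoint '' (hY.normalizedLift : Set (Fin s → Kˣ)) = Y := by
  refine subset_antisymm (by rintro _ ⟨u, ⟨-, hu⟩, rfl⟩; exact hu) fun p hp => ?_
  obtain ⟨u, hu, rfl⟩ := exists_torusPoint_eq_of_mem_projTorus (hY.1 hp)
  exact ⟨u, ⟨hu, hp⟩, rfl⟩

lemma IsTorusSubgroup.finite_normalizedLift (hY : IsTorusSubgroup Y) (hfin : Y.Finite) :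
    Finite hY.normalizedLift :=
  Set.Finite.to_subtype <| Set.Finite.of_finite_image (by rwa [hY.image_normalizedLift])
    (torusPoint_injOn.mono fun _ hu => hu.1)

lemma torusPoint_monomialMap {n : ℕ} (v : Fin s → Fin n → ℤ) (x : Fin n → Kˣ)
    (h : (fun i => ∏ j, ((x j : K) ^ (v i j))) ≠ 0) :
    torusPoint (monomialMap v x) =
      Projectivization.mk K (fun i => ∏ j, ((x j : K) ^ (v i j))) h :=
  ((mk_eq_torusPoint_iff h _).2 ⟨1, by ext; simp [monomialMap_apply]⟩).symm

lemma torusPoint_image_map_monomialMap {n : ℕ} (H : Subgroup Kˣ) (v : Fin s → Fin n → ℤ) :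
    torusPoint '' ((Subgroup.pi Set.univ fun _ => H).map (monomialMap v) : Set (Fin s → Kˣ)) =
      {p | ∃ x : Fin n → Kˣ, (∀ j, x j ∈ H) ∧
        ∃ h : (fun i => ∏ j, ((x j : K) ^ (v i j))) ≠ 0,
          p = Projectivization.mk K (fun i => ∏ j, ((x j : K) ^ (v i j))) h} := by
  ext p
  simp only [Subgroup.coe_map, Subgroup.coe_pi, Set.image_image, Set.mem_image, Set.mem_univ_pi,
    SetLike.mem_coe, Set.mem_ofPred_eq]
  constructor
  · rintro ⟨x, hx, rfl⟩
    have h : (fun i => ∏ j, ((x j : K) ^ (v i j))) ≠ 0 := fun hz =>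
      (monomialMap v x 0).ne_zero (by simpa [monomialMap_apply] using congrFun hz 0)
    exact ⟨x, hx, h, torusPoint_monomialMap v x h⟩
  · rintro ⟨x, hx, h, rfl⟩
    exact ⟨x, hx, torusPoint_monomialMap v x h⟩

end Torus

theorem subgroup_iff_monomial_param_general {K : Type} [Field K] {s : ℕ}
    (hs : 0 < s) (Y : Set (Projectivization K (Fin s → K))) :
    (Y.Finite ∧ IsTorusSubgroup Y) ↔
      ∃ (n : ℕ) (H : Subgroup Kˣ) (v : Fin s → Fin n → ℤ),
        (H : Set Kˣ).Finite ∧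
        Y = {p | ∃ x : Fin n → Kˣ, (∀ j, x j ∈ H) ∧
          ∃ h : (fun i => ∏ j, ((x j : K) ^ (v i j))) ≠ 0,
            p = Projectivization.mk K (fun i => ∏ j, ((x j : K) ^ (v i j))) h} := by
  have : NeZero s := ⟨hs.ne'⟩
  simp only [← torusPoint_image_map_monomialMap]
  constructor
  · rintro ⟨hfin, hY⟩
    have := hY.finite_normalizedLift hfin
    obtain ⟨n, H, v, hH, hG⟩ := hY.normalizedLift.exists_finite_eq_map_monomialMap
    exact ⟨n, H, v, hH, by rw [← hG, hY.image_normalizedLift]⟩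
  · rintro ⟨n, H, v, hH, rfl⟩
    refine ⟨?_, isTorusSubgroup_image _⟩
    rw [Subgroup.coe_map, Subgroup.coe_pi]
    exact ((Set.Finite.pi fun _ => hH).image _).image _

theorem subgroup_iff_monomial_param {K : Type} [Field K] [IsAlgClosed K] {s : ℕ}
    (hs : 0 < s) (Y : Set (Projectivization K (Fin s → K))) :
    (Y.Finite ∧ IsTorusSubgroup Y) ↔
      ∃ (n : ℕ) (H : Subgroup Kˣ) (v : Fin s → Fin n → ℤ),
        (H : Set Kˣ).Finite ∧
        Y = {p | ∃ x : Fin n → Kˣ, (∀ j, x j ∈ H) ∧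
          ∃ h : (fun i => ∏ j, ((x j : K) ^ (v i j))) ≠ 0,
            p = Projectivization.mk K (fun i => ∏ j, ((x j : K) ^ (v i j))) h} :=
  subgroup_iff_monomial_param_general hs Y
end
end
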